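/- Special case of the proof of Proposition 4 (same driver): Let (X,d) be a complete metric space and f_1,…,f_N : X → X nonexpansive maps satisfying condition (C): some composition f_{u_l} ∘ … ∘ f_{u_1} (for a finite word (u_1,…,u_l)) is a Lipschitz contraction with constant L < 1. Let (x_n) and (y_n) be orbits starting at arbitrary points x_0, y_0 and driven by the SAME disjunctive sequence (i_n)_{n≥1}. Then there is a subsequence (k_n) with d(x_{k_n}, y_{k_n}) → 0; consequently ω((x_n)) = ω((y_n)). -/
import Mathlib


/-- The omega-limit set of a sequence: the descending intersection of the
closures of the tails of the sequence. -/
def omegaLimitSet {X : Type*} [MetricSpace X] (x : ℕ → X) : Set X :=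
  ⋂ m : ℕ, closure (x '' Set.Ici m)

/-- Apply the maps of the IFS along a word, the head of the list acting first:
`wordMap f [u₁, …, u_l] = f_{u_l} ∘ … ∘ f_{u_1}`. -/
def wordMap {X : Type*} {N : ℕ} (f : Fin N → X → X) : List (Fin N) → X → X
  | [], p => p
  | i :: w, p => wordMap f w (f i p)

/-- A sequence of symbols is disjunctive if it contains every finite word over
the alphabet as a consecutive subword. -/
def Disjunctive {N : ℕ} (σ : ℕ → Fin N) : Prop :=
  ∀ (m : ℕ) (w : Fin m → Fin N), ∃ n₀ : ℕ, ∀ j : Fin m, σ (n₀ + (j : ℕ)) = w j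

lemma wordMap_append {X : Type*} {N : ℕ} (f : Fin N → X → X) (w₁ w₂ : List (Fin N)) (p : X) :
    wordMap f (w₁ ++ w₂) p = wordMap f w₂ (wordMap f w₁ p) := by
  induction w₁ generalizing p with
  | nil => rfl
  | cons i t ih => simp [wordMap, ih]

lemma orbit_word {X : Type*} {N : ℕ} (f : Fin N → X → X) (x : ℕ → X) (σ : ℕ → Fin N)
    (hx : ∀ n : ℕ, x (n + 1) = f (σ n) (x n)) :
    ∀ (w : List (Fin N)) (n₀ : ℕ), (∀ j : Fin w.length, σ (n₀ + (j : ℕ)) = w.get j) →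
      x (n₀ + w.length) = wordMap f w (x n₀) := by
  intro w
  induction w with
  | nil => intro n₀ _; simp [wordMap]
  | cons i t ih =>
    intro n₀ h
    have h0 : σ n₀ = i := by simpa using h ⟨0, by simp⟩
    have hstep : x (n₀ + 1) = f i (x n₀) := by rw [hx n₀, h0]
    have ht : ∀ j : Fin t.length, σ (n₀ + 1 + (j : ℕ)) = t.get j := by
      intro j
      have := h ⟨(j : ℕ) + 1, by simp [Nat.succ_lt_succ j.isLt]⟩
      simpa [Nat.add_assoc, Nat.add_comm 1 (j : ℕ)] using this
    have := ih (n₀ + 1) ht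
    have hlen : n₀ + (i :: t).length = n₀ + 1 + t.length := by simp; omega
    rw [hlen, this, hstep]
    rfl

lemma rep_contract {X : Type*} [MetricSpace X] {N : ℕ} (f : Fin N → X → X) (u : List (Fin N)) (L : ℝ)
    (hu : ∀ a b : X, dist (wordMap f u a) (wordMap f u b) ≤ L * dist a b) (hL0 : 0 ≤ L) :
    ∀ (m : ℕ) (a b : X),
      dist (wordMap f (List.flatten (List.replicate m u)) a)
        (wordMap f (List.flatten (List.replicate m u)) b) ≤ L ^ m * dist a b := by
  intro m
  induction m with
  | zero => intro a b; simp [wordMap]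
  | succ m ih =>
    intro a b
    rw [List.replicate_succ, List.flatten_cons, wordMap_append, wordMap_append]
    have h1 := ih (wordMap f u a) (wordMap f u b)
    have h2 : L ^ m * dist (wordMap f u a) (wordMap f u b) ≤ L ^ m * (L * dist a b) :=
      mul_le_mul_of_nonneg_left (hu a b) (pow_nonneg hL0 m)
    have : L ^ m * (L * dist a b) = L ^ (m + 1) * dist a b := by ring
    linarith

lemma omega_subset {X : Type*} [MetricSpace X] (x y : ℕ → X)
    (h : Filter.Tendsto (fun n => dist (x n) (y n)) Filter.atTop (nhds 0)) :
    omegaLimitSet x ⊆ omegaLimitSet y := by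
  intro p hp
  simp only [omegaLimitSet, Set.mem_iInter] at hp ⊢
  intro m
  rw [Metric.mem_closure_iff]
  intro ε hε
  obtain ⟨M, hM⟩ := (Metric.tendsto_atTop.mp h) (ε / 2) (by linarith)
  have hpm := hp (max m M)
  rw [Metric.mem_closure_iff] at hpm
  obtain ⟨b, ⟨n, hn, rfl⟩, hb⟩ := hpm (ε / 2) (by linarith)
  refine ⟨y n, ⟨n, le_trans (le_max_left m M) hn, rfl⟩, ?_⟩
  have h1 : dist (x n) (y n) < ε / 2 := by
    have := hM n (le_trans (le_max_right m M) hn)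
    rwa [Real.dist_eq, sub_zero, abs_of_nonneg dist_nonneg] at this
  calc dist p (y n) ≤ dist p (x n) + dist (x n) (y n) := dist_triangle _ _ _
    _ < ε / 2 + ε / 2 := add_lt_add hb h1
    _ = ε := by ring

/-- same driver case: for a nonexpansive IFS on a complete metric
space satisfying condition (C), two orbits starting at arbitrary points and
driven by the same disjunctive sequence admit a subsequence along which they
approach each other; consequently their omega-limit sets coincide. -/
theorem stmt_11 {X : Type*} [MetricSpace X] [CompleteSpace X] {N : ℕ}
    (f : Fin N → X → X)
    (hf : ∀ (i : Fin N) (a b : X), dist (f i a) (f i b) ≤ dist a b)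
    (hcontr : ∃ (u : List (Fin N)) (L : ℝ), u ≠ [] ∧ 0 ≤ L ∧ L < 1 ∧
      ∀ a b : X, dist (wordMap f u a) (wordMap f u b) ≤ L * dist a b)
    (x y : ℕ → X) (σ : ℕ → Fin N)
    (hx : ∀ n : ℕ, x (n + 1) = f (σ n) (x n))
    (hy : ∀ n : ℕ, y (n + 1) = f (σ n) (y n))
    (hσ : Disjunctive σ) :
    (∃ k : ℕ → ℕ, StrictMono k ∧
        Filter.Tendsto (fun n => dist (x (k n)) (y (k n))) Filter.atTop (nhds 0)) ∧
      omegaLimitSet x = omegaLimitSet y := by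
  obtain ⟨u, L, hune, hL0, hL1, hu⟩ := hcontr
  set D : ℕ → ℝ := fun n => dist (x n) (y n) with hD
  have hanti : Antitone D := by
    apply antitone_nat_of_succ_le
    intro n
    simp only [hD]
    rw [hx n, hy n]
    exact hf (σ n) _ _
  -- main convergence
  have hmain : Filter.Tendsto D Filter.atTop (nhds 0) := by
    rw [Metric.tendsto_atTop]
    intro ε hε
    -- choose m with L^m * D 0 < ε
    have hpow : Filter.Tendsto (fun m : ℕ => L ^ m * D 0) Filter.atTop (nhds 0) := by
      have := (tendsto_pow_atTop_nhds_zero_of_lt_one hL0 hL1).mul_const (D 0)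
      simpa using this
    obtain ⟨m, hm⟩ := (hpow.eventually (gt_mem_nhds hε)).exists
    -- find occurrence of u^m
    set l : List (Fin N) := List.flatten (List.replicate m u) with hl
    obtain ⟨n₀, hn₀⟩ := hσ l.length (fun j => l.get j)
    have hxw := orbit_word f x σ hx l n₀ hn₀
    have hyw := orbit_word f y σ hy l n₀ hn₀
    have hcon : D (n₀ + l.length) ≤ L ^ m * D n₀ := by
      simp only [hD]
      rw [hxw, hyw]
      exact rep_contract f u L hu hL0 m _ _
    have hDn₀ : D n₀ ≤ D 0 := hanti (Nat.zero_le n₀)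
    have hsmall : D (n₀ + l.length) < ε := by
      calc D (n₀ + l.length) ≤ L ^ m * D n₀ := hcon
        _ ≤ L ^ m * D 0 := mul_le_mul_of_nonneg_left hDn₀ (pow_nonneg hL0 m)
        _ < ε := hm
    refine ⟨n₀ + l.length, fun n hn => ?_⟩
    rw [Real.dist_eq, sub_zero, abs_of_nonneg dist_nonneg]
    exact lt_of_le_of_lt (hanti hn) hsmall
  refine ⟨⟨id, strictMono_id, hmain⟩, ?_⟩
  have hsymm : Filter.Tendsto (fun n => dist (y n) (x n)) Filter.atTop (nhds 0) := by
    simpa [dist_comm] using hmain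
  exact Set.Subset.antisymm (omega_subset x y hmain) (omega_subset y x hsymm)
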